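/- Let t ↦ (φ(t), θ(t), ψ(t)) be a differentiable curve with γ(t) := (sin θ(t) sin ψ(t), sin θ(t) cos ψ(t), cos θ(t)) ≠ 0 for all t, and set g(t) = g(φ(t), θ(t), ψ(t)). Then the third component of the rolling constraint is holonomic: d/dt ( −⟨r(γ(t)), γ(t)⟩ ) = −( g′(t) · r(γ(t)) )₃, i.e. the function z(t) = −⟨r(γ(t)), γ(t)⟩ satisfies z′ = −(g′ r)·e₃. -/

import Mathlib

open Real Matrix

/-- Euler-angle matrix in the `x`-convention. -/
noncomputable def eulerMatrix (φ θ ψ : ℝ) : Matrix (Fin 3) (Fin 3) ℝ :=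
  !![cos ψ * cos φ - cos θ * sin φ * sin ψ,
     -sin ψ * cos φ - cos θ * sin φ * cos ψ,
     sin θ * sin φ;
     cos ψ * sin φ + cos θ * cos φ * sin ψ,
     -sin ψ * sin φ + cos θ * cos φ * cos ψ,
     -sin θ * cos φ;
     sin θ * sin ψ, sin θ * cos ψ, cos θ]

/-- The contact point vector `r(γ)` of the ellipsoid with semi-axes `a, b, c`. -/
noncomputable def contactPoint (a b c : ℝ) (γ : Fin 3 → ℝ) : Fin 3 → ℝ :=
  ![-(a ^ 2 * γ 0) / Real.sqrt (a ^ 2 * γ 0 ^ 2 + b ^ 2 * γ 1 ^ 2 + c ^ 2 * γ 2 ^ 2),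
    -(b ^ 2 * γ 1) / Real.sqrt (a ^ 2 * γ 0 ^ 2 + b ^ 2 * γ 1 ^ 2 + c ^ 2 * γ 2 ^ 2),
    -(c ^ 2 * γ 2) / Real.sqrt (a ^ 2 * γ 0 ^ 2 + b ^ 2 * γ 1 ^ 2 + c ^ 2 * γ 2 ^ 2)]

/-!
The height `-⟨r(γ), γ⟩` is the support function `Δ(γ)` of the ellipsoid, and `r(γ) = -∇Δ(γ)`,
so by the chain rule its derivative along a curve `γ(t)` is `-⟨r(γ), γ'⟩`. Since the third row
of the Euler matrix `g(t)` is `γ(t)` itself, this is also `-(g' r)₃`.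
-/

noncomputable def ellipsoidSupport (a b c : ℝ) (γ : Fin 3 → ℝ) : ℝ :=
  √(a ^ 2 * γ 0 ^ 2 + b ^ 2 * γ 1 ^ 2 + c ^ 2 * γ 2 ^ 2)

section EllipsoidSupport

variable {a b c : ℝ}

lemma ellipsoidSupport_pos (ha : a ≠ 0) (hb : b ≠ 0) (hc : c ≠ 0) {γ : Fin 3 → ℝ}
    (hγ : γ ≠ 0) : 0 < ellipsoidSupport a b c γ := by
  obtain ⟨i, hi⟩ : ∃ i, γ i ≠ 0 := by
    by_contra! h
    exact hγ (funext h)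
  refine Real.sqrt_pos.2 ?_
  fin_cases i <;> simp only [Fin.zero_eta, Fin.mk_one, Fin.reduceFinMk] at hi <;> positivity

lemma neg_contactPoint_dotProduct_self (γ : Fin 3 → ℝ) :
    -(contactPoint a b c γ ⬝ᵥ γ) = ellipsoidSupport a b c γ := by
  simp only [contactPoint, ellipsoidSupport, dotProduct, Fin.sum_univ_three, cons_val_zero,
    cons_val_one, cons_val_two, head_cons, tail_cons]
  conv_rhs => rw [← Real.div_sqrt]
  ring

lemma hasDerivAt_ellipsoidSupport_comp {γ : ℝ → Fin 3 → ℝ} {γ' : Fin 3 → ℝ} {t : ℝ}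
    (hγ : HasDerivAt γ γ' t) (hpos : 0 < ellipsoidSupport a b c (γ t)) :
    HasDerivAt (fun s => ellipsoidSupport a b c (γ s)) (-(contactPoint a b c (γ t) ⬝ᵥ γ')) t := by
  have hcomp (i : Fin 3) : HasDerivAt (fun s => γ s i) (γ' i) t := hasDerivAt_pi.1 hγ i
  have hsq : HasDerivAt (fun s => a ^ 2 * γ s 0 ^ 2 + b ^ 2 * γ s 1 ^ 2 + c ^ 2 * γ s 2 ^ 2)
      _ t :=
    (((hcomp 0).pow 2).const_mul (a ^ 2)).add (((hcomp 1).pow 2).const_mul (b ^ 2))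
      |>.add (((hcomp 2).pow 2).const_mul (c ^ 2))
  have hQ : a ^ 2 * γ t 0 ^ 2 + b ^ 2 * γ t 1 ^ 2 + c ^ 2 * γ t 2 ^ 2 ≠ 0 :=
    (Real.sqrt_pos.1 hpos).ne'
  refine (hsq.sqrt hQ).congr_deriv ?_
  simp only [contactPoint, dotProduct, Fin.sum_univ_three, cons_val_zero, cons_val_one,
    cons_val_two, head_cons, tail_cons]
  field_simp
  ring

end EllipsoidSupport

lemma eulerMatrix_row_two (φ θ ψ : ℝ) :
    eulerMatrix φ θ ψ 2 = ![sin θ * sin ψ, sin θ * cos ψ, cos θ] := by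
  ext j
  fin_cases j <;> rfl

theorem third_rolling_constraint_holonomic_general (a b c : ℝ) (ha : 0 < a) (hb : 0 < b)
    (hc : 0 < c) (φ θ ψ : ℝ → ℝ)
    (hθ : Differentiable ℝ θ) (hψ : Differentiable ℝ ψ)
    (γ : ℝ → Fin 3 → ℝ)
    (hγ : ∀ t, γ t = ![sin (θ t) * sin (ψ t), sin (θ t) * cos (ψ t), cos (θ t)])
    (hγ0 : ∀ t, γ t ≠ 0) (t : ℝ) :
    deriv (fun s => -(contactPoint a b c (γ s) ⬝ᵥ γ s)) t =
      -((Matrix.of fun i j => deriv (fun s => eulerMatrix (φ s) (θ s) (ψ s) i j) t).mulVec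
          (contactPoint a b c (γ t)) 2) := by
  have hγfun : γ = fun s => ![sin (θ s) * sin (ψ s), sin (θ s) * cos (ψ s), cos (θ s)] :=
    funext hγ
  have hdiff (j : Fin 3) : DifferentiableAt ℝ (fun s => γ s j) t := by
    subst hγfun
    fin_cases j <;> simp only [Fin.zero_eta, Fin.mk_one, Fin.reduceFinMk, cons_val_zero,
      cons_val_one, cons_val_two, head_cons, tail_cons] <;> fun_prop
  have hγ' : HasDerivAt γ (fun j => deriv (fun s => γ s j) t) t :=
    hasDerivAt_pi.2 fun j => (hdiff j).hasDerivAt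
  have hrow : (fun j => deriv (fun s => eulerMatrix (φ s) (θ s) (ψ s) 2 j) t) =
      fun j => deriv (fun s => γ s j) t := by
    simp only [eulerMatrix_row_two, hγfun]
  simp only [neg_contactPoint_dotProduct_self]
  rw [(hasDerivAt_ellipsoidSupport_comp hγ'
    (ellipsoidSupport_pos ha.ne' hb.ne' hc.ne' (hγ0 t))).deriv, mulVec, dotProduct_comm]
  simp only [of_apply, hrow]

/-- For a differentiable curve of Euler angles, the third component of the rolling
constraint is holonomic: the height `z(t) = −⟨r(γ(t)), γ(t)⟩` satisfies
`z′(t) = −(g′(t) · r(γ(t)))₃`. -/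
theorem third_rolling_constraint_holonomic (a b c : ℝ) (ha : 0 < a) (hb : 0 < b)
    (hc : 0 < c) (φ θ ψ : ℝ → ℝ)
    (hφ : Differentiable ℝ φ) (hθ : Differentiable ℝ θ) (hψ : Differentiable ℝ ψ)
    (γ : ℝ → Fin 3 → ℝ)
    (hγ : ∀ t, γ t = ![sin (θ t) * sin (ψ t), sin (θ t) * cos (ψ t), cos (θ t)])
    (hγ0 : ∀ t, γ t ≠ 0) (t : ℝ) :
    deriv (fun s => -(contactPoint a b c (γ s) ⬝ᵥ γ s)) t =
      -((Matrix.of fun i j => deriv (fun s => eulerMatrix (φ s) (θ s) (ψ s) i j) t).mulVec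
          (contactPoint a b c (γ t)) 2) :=
  third_rolling_constraint_holonomic_general a b c ha hb hc φ θ ψ hθ hψ γ hγ hγ0 t
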